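/- arXiv:2108.07416 — 4 statements merged into one kernel-verified Lean document; each statement's English description precedes it below -/
import Mathlib

section
/- Let (y_j)_{j≥1} be a positive doubling sequence, i.e. y_1 > 0 and y_{j+1} ≥ 2 y_j for all j. Then for every i ∈ ℕ, the absolute value of the product over all j ≠ i of (1 − y_i/y_j)^{−1} is at most 4. -/
open Finset Filter

private lemma dpb_half_pow_le (k : ℕ) : ((1:ℝ)/2) ^ (k+1) ≤ 1/2 := by
  rw [pow_succ]
  have h1 : ((1:ℝ)/2) ^ k ≤ 1 := pow_le_one₀ (by norm_num) (by norm_num)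
  have h0 : (0:ℝ) ≤ ((1:ℝ)/2) ^ k := by positivity
  nlinarith

private lemma dpb_prodLB (n : ℕ) :
    (1 + (1/2:ℝ)^n + 2*(1/4:ℝ)^n)/4 ≤ ∏ k ∈ Finset.range n, (1 - (1/2:ℝ)^(k+1)) := by
  induction n with
  | zero => norm_num
  | succ n ih =>
    rw [Finset.prod_range_succ]
    have hu : (0:ℝ) < (1/2:ℝ)^n := by positivity
    have hu1 : (1/2:ℝ)^n ≤ 1 := pow_le_one₀ (by norm_num) (by norm_num)
    have h4 : (1/4:ℝ)^n = ((1/2:ℝ)^n)^2 := by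
      rw [← pow_mul, mul_comm, pow_mul]; norm_num
    have hpos : (0:ℝ) ≤ 1 - (1/2:ℝ)^(n+1) := by
      have := dpb_half_pow_le n; linarith
    have hkey := mul_le_mul_of_nonneg_right ih hpos
    rw [pow_succ, pow_succ, h4] at *
    nlinarith [sq_nonneg ((1/2:ℝ)^n)]

private lemma dpb_prodLB' (n : ℕ) :
    (1/4 : ℝ) ≤ ∏ k ∈ Finset.range n, (1 - (1/2:ℝ)^(k+1)) := by
  have := dpb_prodLB n
  have h1 : (0:ℝ) ≤ (1/2:ℝ)^n := by positivity
  have h2 : (0:ℝ) ≤ (1/4:ℝ)^n := by positivity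
  linarith

private lemma dpb_g_eq (i N : ℕ) :
    ∏ j ∈ Finset.range N, (if i < j then (1 - (1/2:ℝ)^(j-i))⁻¹ else 1)
      = (∏ k ∈ Finset.range (N - (i+1)), (1 - (1/2:ℝ)^(k+1)))⁻¹ := by
  induction N with
  | zero => simp
  | succ N ih =>
    rw [Finset.prod_range_succ, ih]
    by_cases h : i < N
    · rw [if_pos h]
      have h1 : N + 1 - (i+1) = (N - (i+1)) + 1 := by omega
      have h2 : N - (i+1) + 1 = N - i := by omega
      rw [h1, Finset.prod_range_succ, mul_inv, h2]
    · rw [if_neg h]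
      have h1 : N + 1 - (i+1) = N - (i+1) := by omega
      rw [h1, mul_one]

/-- For a positive doubling sequence `y` (i.e. `y 0 > 0` and `y (j+1) ≥ 2 * y j`),
the absolute value of the infinite product over all `j ≠ i` of `(1 - y i / y j)⁻¹`
is at most `4`. -/
theorem doubling_product_bound
    (y : ℕ → ℝ) (h0 : 0 < y 0) (hd : ∀ j : ℕ, 2 * y j ≤ y (j + 1)) (i : ℕ) :
    |∏' j : {j : ℕ // j ≠ i}, (1 - y i / y (j : ℕ))⁻¹| ≤ 4 := by
  have hy : ∀ j, 0 < y j := by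
    intro j
    induction j with
    | zero => exact h0
    | succ n ih => nlinarith [hd n]
  have hpow : ∀ a k : ℕ, 2^k * y a ≤ y (a + k) := by
    intro a k
    induction k with
    | zero => simp
    | succ k ih =>
      calc (2:ℝ)^(k+1) * y a = 2 * (2^k * y a) := by ring
        _ ≤ 2 * y (a+k) := by linarith
        _ ≤ y (a+k+1) := hd _
  set f : {j : ℕ // j ≠ i} → ℝ := fun j => (1 - y i / y (j:ℕ))⁻¹ with hf
  set g : ℕ → ℝ := fun j => if i < j then (1 - (1/2:ℝ)^(j-i))⁻¹ else 1 with hg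
  have hfpos : ∀ k : ℕ, (0:ℝ) < 1 - (1/2:ℝ)^(k+1) := by
    intro k; have := dpb_half_pow_le k; linarith
  have hg1 : ∀ j, 1 ≤ g j := by
    intro j
    simp only [hg]
    split_ifs with h
    · have hk : ∃ k, j - i = k + 1 := ⟨j - i - 1, by omega⟩
      obtain ⟨k, hk⟩ := hk
      rw [hk, le_inv_comm₀ one_pos (hfpos k), inv_one]
      have h2 : (0:ℝ) ≤ (1/2:ℝ)^(k+1) := by positivity
      linarith
    · exact le_refl 1
  have habs : ∀ j : {j : ℕ // j ≠ i}, |f j| ≤ g (j : ℕ) := by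
    intro j
    rcases lt_or_gt_of_ne j.2 with h | h
    -- j < i
    · have h2 : (2:ℝ) ≤ 2 ^ (i - (j:ℕ)) := by
        calc (2:ℝ) = 2^1 := by norm_num
          _ ≤ 2 ^ (i - (j:ℕ)) := by
            apply pow_le_pow_right₀ (by norm_num); omega
      have hyij : 2 * y (j:ℕ) ≤ y i := by
        have := hpow (j:ℕ) (i - (j:ℕ))
        rw [show (j:ℕ) + (i - (j:ℕ)) = i by omega] at this
        nlinarith [hy (j:ℕ)]
      have hdiv : (2:ℝ) ≤ y i / y (j:ℕ) := by
        rw [le_div_iff₀ (hy (j:ℕ))]; linarith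
      have h1 : (1:ℝ) ≤ |1 - y i / y (j:ℕ)| := by
        rw [abs_of_nonpos (by linarith)]; linarith
      have : |f j| ≤ 1 := by
        simp only [hf, abs_inv]
        exact inv_le_one_of_one_le₀ h1
      exact le_trans this (hg1 _)
    -- i < j
    · have hk : ∃ k, (j:ℕ) - i = k + 1 := ⟨(j:ℕ) - i - 1, by omega⟩
      obtain ⟨k, hk⟩ := hk
      have hyij := hpow i ((j:ℕ) - i)
      rw [show i + ((j:ℕ) - i) = (j:ℕ) by omega] at hyij
      have hhalf : y i / y (j:ℕ) ≤ (1/2:ℝ)^((j:ℕ) - i) := by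
        rw [div_le_iff₀ (hy (j:ℕ))]
        have hmul : ((1/2:ℝ)^((j:ℕ)-i)) * (2^((j:ℕ)-i) * y i) ≤ ((1/2:ℝ)^((j:ℕ)-i)) * y (j:ℕ) :=
          mul_le_mul_of_nonneg_left hyij (by positivity)
        have hone : ((1/2:ℝ)^((j:ℕ)-i)) * (2:ℝ)^((j:ℕ)-i) = 1 := by
          rw [← mul_pow]; norm_num
        calc y i = ((1/2:ℝ)^((j:ℕ)-i)) * (2^((j:ℕ)-i) * y i) := by
              rw [← mul_assoc, hone, one_mul]
          _ ≤ ((1/2:ℝ)^((j:ℕ)-i)) * y (j:ℕ) := hmul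
      have hpos : (0:ℝ) < 1 - (1/2:ℝ)^((j:ℕ)-i) := by rw [hk]; exact hfpos k
      have hposf : (0:ℝ) < 1 - y i / y (j:ℕ) := by linarith
      have habs1 : |f j| = (1 - y i / y (j:ℕ))⁻¹ := by
        simp only [hf]
        rw [abs_of_pos (inv_pos.mpr hposf)]
      rw [habs1]
      calc (1 - y i / y (j:ℕ))⁻¹ ≤ (1 - (1/2:ℝ)^((j:ℕ)-i))⁻¹ := by
            apply inv_anti₀ hpos; linarith
        _ = g (j:ℕ) := by simp only [hg]; rw [if_pos h]
  have key : ∀ s : Finset {j : ℕ // j ≠ i}, ∏ j ∈ s, |f j| ≤ 4 := by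
    intro s
    have step1 : ∏ j ∈ s, |f j| ≤ ∏ j ∈ s, g (j : ℕ) :=
      Finset.prod_le_prod (fun j _ => abs_nonneg _) (fun j _ => habs j)
    have step2 : ∏ j ∈ s, g (j : ℕ) = ∏ j ∈ s.image Subtype.val, g j :=
      (Finset.prod_image (fun x _ y _ h => Subtype.ext h)).symm
    obtain ⟨N, hN⟩ := Finset.exists_nat_subset_range (s.image Subtype.val)
    have hone : ∀ t : Finset ℕ, (1:ℝ) ≤ ∏ j ∈ t, g j := by
      intro t
      calc (1:ℝ) = ∏ _j ∈ t, 1 := by simp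
        _ ≤ ∏ j ∈ t, g j := Finset.prod_le_prod (by norm_num) (fun j _ => hg1 j)
    have step3 : ∏ j ∈ s.image Subtype.val, g j ≤ ∏ j ∈ Finset.range N, g j := by
      rw [← Finset.prod_sdiff hN]
      exact le_mul_of_one_le_left (le_trans zero_le_one (hone _)) (hone _)
    have step4 : ∏ j ∈ Finset.range N, g j
        = (∏ k ∈ Finset.range (N - (i+1)), (1 - (1/2:ℝ)^(k+1)))⁻¹ := dpb_g_eq i N
    have step5 : (∏ k ∈ Finset.range (N - (i+1)), (1 - (1/2:ℝ)^(k+1)))⁻¹ ≤ 4 := by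
      have h14 := dpb_prodLB' (N - (i+1))
      have hp : (0:ℝ) < ∏ k ∈ Finset.range (N - (i+1)), (1 - (1/2:ℝ)^(k+1)) := by linarith
      rw [inv_le_comm₀ hp (by norm_num : (0:ℝ) < 4)]
      linarith
    calc ∏ j ∈ s, |f j| ≤ ∏ j ∈ s, g (j : ℕ) := step1
      _ = ∏ j ∈ s.image Subtype.val, g j := step2
      _ ≤ ∏ j ∈ Finset.range N, g j := step3
      _ = _ := step4
      _ ≤ 4 := step5
  by_cases hm : Multipliable f
  · have h2 : Tendsto (fun s : Finset {j : ℕ // j ≠ i} => ∏ j ∈ s, |f j|) atTop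
        (nhds |∏' j, f j|) := hm.hasProd.abs
    exact le_of_tendsto' h2 key
  · rw [tprod_eq_one_of_not_multipliable hm]
    norm_num
end

section
/- Let q ∈ ℕ be even, r ∈ ℝ∖ℕ₀ with qr ∈ ℕ, c > 0, and A_k as in the expansion of (c+x^q)^r. Then for k ≥ q⌈r⌉, A_k(x) = (−1)^k ∑_{i=⌈r⌉}^{⌊k/q⌋} C(r,i) C(qr−qi, k−qi) c^i x^{k−qi}, and A_k has degree exactly k − q⌈r⌉ with nonzero leading coefficient (−1)^k C(r, ⌈r⌉) C(qr − q⌈r⌉, k − q⌈r⌉) c^{⌈r⌉}. Hence (A_k : k ≥ q⌈r⌉) is a basis of the space of real polynomials. -/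
/-!
Write `q r = m` with `m ∈ ℕ`. For `j < ⌈r⌉` we have `q j ≤ m < q ⌈r⌉ ≤ k` (the middle inequality
because `r ∉ ℕ`), so `C(qr - qj, k - qj) = C(m - qj, k - qj)` is a binomial coefficient of a natural
number with a larger lower index and vanishes. In the surviving sum the exponents `k - qi` strictly
decrease in `i`, so the term `i = ⌈r⌉` is the leading one; its coefficient is nonzero because
`r ∉ ℕ` and `qr - q⌈r⌉ < 0`. Hence `A_{n + q⌈r⌉}` has degree
exactly `n`, and any such sequence is a basis of `ℝ[X]`.
-/

/-- The generalized binomial coefficient `C(u, j) = u(u-1)⋯(u-j+1)/j!`. -/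
noncomputable def genBinom (u : ℝ) (j : ℕ) : ℝ :=
  (∏ m ∈ Finset.range j, (u - m)) / (j.factorial : ℝ)

/-- The polynomial `A_k(x) = ∑_{j=0}^{⌊k/q⌋} (-1)^k C(r,j) C(q(r-j), k-qj) c^j x^{k-qj}`. -/
noncomputable def Apoly (q : ℕ) (r c : ℝ) (k : ℕ) : Polynomial ℝ :=
  ∑ j ∈ Finset.range (k / q + 1),
    Polynomial.C ((-1 : ℝ) ^ k * genBinom r j *
        genBinom ((q : ℝ) * (r - j)) (k - q * j) * c ^ j) *
      Polynomial.X ^ (k - q * j)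

open Polynomial Finset

lemma genBinom_ne_zero {u : ℝ} {j : ℕ} (h : ∀ t : ℕ, t < j → u ≠ t) : genBinom u j ≠ 0 :=
  div_ne_zero (prod_ne_zero_iff.2 fun t ht => sub_ne_zero.2 (h t (mem_range.1 ht)))
    (Nat.cast_ne_zero.2 j.factorial_ne_zero)

lemma genBinom_ne_zero_of_neg {u : ℝ} (hu : u < 0) (j : ℕ) : genBinom u j ≠ 0 :=
  genBinom_ne_zero fun t _ h => (h ▸ hu : (t : ℝ) < 0).not_ge t.cast_nonneg

lemma genBinom_natCast_eq_zero {n j : ℕ} (h : n < j) : genBinom n j = 0 := by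
  rw [genBinom, prod_eq_zero (mem_range.2 h) (sub_self _), zero_div]

section SumCMulXPowSub

variable {R : Type*} [Semiring R] (f : ℕ → R) {q a b k : ℕ}

lemma degree_sum_Icc_C_mul_X_pow_sub_le :
    (∑ i ∈ Icc a b, C (f i) * X ^ (k - q * i)).degree ≤ ((k - q * a : ℕ) : WithBot ℕ) := by
  refine (degree_sum_le _ _).trans (Finset.sup_le fun i hi => ?_)
  refine (degree_C_mul_X_pow_le _ _).trans ?_
  exact_mod_cast Nat.sub_le_sub_left (Nat.mul_le_mul_left q (mem_Icc.1 hi).1) k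

lemma coeff_sum_Icc_C_mul_X_pow_sub (hq : 0 < q) (hab : a ≤ b) (hbk : q * b ≤ k) :
    (∑ i ∈ Icc a b, C (f i) * X ^ (k - q * i)).coeff (k - q * a) = f a := by
  rw [finsetSum_coeff, sum_eq_single_of_mem a (mem_Icc.2 ⟨le_rfl, hab⟩)]
  · simp
  · intro i hi hia
    have : q * a < q * i := Nat.mul_lt_mul_of_pos_left ((mem_Icc.1 hi).1.lt_of_ne' hia) hq
    have : q * i ≤ k := (Nat.mul_le_mul_left q (mem_Icc.1 hi).2).trans hbk
    rw [coeff_C_mul_X_pow, if_neg (by omega)]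

lemma degree_sum_Icc_C_mul_X_pow_sub (hq : 0 < q) (hab : a ≤ b) (hbk : q * b ≤ k)
    (ha : f a ≠ 0) :
    (∑ i ∈ Icc a b, C (f i) * X ^ (k - q * i)).degree = ((k - q * a : ℕ) : WithBot ℕ) :=
  degree_eq_of_le_of_coeff_ne_zero (degree_sum_Icc_C_mul_X_pow_sub_le f)
    (by rwa [coeff_sum_Icc_C_mul_X_pow_sub f hq hab hbk])

lemma leadingCoeff_sum_Icc_C_mul_X_pow_sub (hq : 0 < q) (hab : a ≤ b) (hbk : q * b ≤ k)
    (ha : f a ≠ 0) : (∑ i ∈ Icc a b, C (f i) * X ^ (k - q * i)).leadingCoeff = f a := by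
  rw [leadingCoeff, natDegree_eq_of_degree_eq_some (degree_sum_Icc_C_mul_X_pow_sub f hq hab hbk ha),
    coeff_sum_Icc_C_mul_X_pow_sub f hq hab hbk]

end SumCMulXPowSub

lemma Apoly_eq_sum_Icc_ceil {q : ℕ} {r : ℝ} (c : ℝ) {m k : ℕ} (hm : (q : ℝ) * r = m)
    (hmk : m < k) :
    Apoly q r c k = ∑ i ∈ Icc ⌈r⌉₊ (k / q),
      C ((-1 : ℝ) ^ k * genBinom r i * genBinom ((q : ℝ) * r - q * i) (k - q * i) * c ^ i) *
        X ^ (k - q * i) := by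
  rw [Apoly]
  simp only [mul_sub]
  refine (sum_subset (fun i hi => mem_range.2 (Nat.lt_succ_of_le (mem_Icc.1 hi).2)) ?_).symm
  intro j hj hj_Icc
  have hj_lt : j < ⌈r⌉₊ := by
    rw [mem_Icc] at hj_Icc
    rw [mem_range] at hj
    omega
  have hqj : q * j ≤ m := by
    have := mul_le_mul_of_nonneg_left (Nat.lt_ceil.1 hj_lt).le q.cast_nonneg
    rw [hm] at this
    exact_mod_cast this
  have hcast : (q : ℝ) * r - q * j = (m - q * j : ℕ) := by
    rw [hm, Nat.cast_sub hqj]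
    push_cast
    ring
  rw [hcast, genBinom_natCast_eq_zero (by omega), mul_zero, zero_mul, C_0, zero_mul]

section NatCeil

variable {q : ℕ} {r : ℝ}

lemma mul_lt_mul_ceil_of_ne_natCast (hq0 : 0 < q) (hr : ∀ n : ℕ, r ≠ n) :
    (q : ℝ) * r < q * ⌈r⌉₊ :=
  mul_lt_mul_of_pos_left ((Nat.le_ceil r).lt_of_ne (hr _)) (Nat.cast_pos.2 hq0)

lemma lt_mul_ceil_of_ne_natCast (hq0 : 0 < q) (hr : ∀ n : ℕ, r ≠ n) {m : ℕ}
    (hm : (q : ℝ) * r = m) : m < q * ⌈r⌉₊ := by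
  exact_mod_cast hm ▸ mul_lt_mul_ceil_of_ne_natCast hq0 hr

lemma Apoly_leadingTerm_ne_zero (hq0 : 0 < q) (hr : ∀ n : ℕ, r ≠ n) {c : ℝ} (hc : c ≠ 0)
    (k j : ℕ) :
    (-1 : ℝ) ^ k * genBinom r ⌈r⌉₊ * genBinom ((q : ℝ) * r - q * ⌈r⌉₊) j * c ^ ⌈r⌉₊ ≠ 0 :=
  mul_ne_zero (mul_ne_zero (mul_ne_zero (pow_ne_zero _ (by norm_num))
    (genBinom_ne_zero fun t _ => hr t))
    (genBinom_ne_zero_of_neg (sub_neg.2 (mul_lt_mul_ceil_of_ne_natCast hq0 hr)) _))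
    (pow_ne_zero _ hc)

lemma Apoly_degree (hq0 : 0 < q) (hr : ∀ n : ℕ, r ≠ n) {m : ℕ} (hm : (q : ℝ) * r = m) {c : ℝ}
    (hc : c ≠ 0) {k : ℕ} (hk : q * ⌈r⌉₊ ≤ k) :
    (Apoly q r c k).degree = ((k - q * ⌈r⌉₊ : ℕ) : WithBot ℕ) := by
  rw [Apoly_eq_sum_Icc_ceil c hm ((lt_mul_ceil_of_ne_natCast hq0 hr hm).trans_le hk)]
  exact degree_sum_Icc_C_mul_X_pow_sub _ hq0
    ((Nat.le_div_iff_mul_le hq0).2 (by rwa [mul_comm])) (Nat.mul_div_le k q)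
    (Apoly_leadingTerm_ne_zero hq0 hr hc k _)

lemma Apoly_leadingCoeff (hq0 : 0 < q) (hr : ∀ n : ℕ, r ≠ n) {m : ℕ} (hm : (q : ℝ) * r = m)
    {c : ℝ} (hc : c ≠ 0) {k : ℕ} (hk : q * ⌈r⌉₊ ≤ k) :
    (Apoly q r c k).leadingCoeff = (-1 : ℝ) ^ k * genBinom r ⌈r⌉₊ *
      genBinom ((q : ℝ) * r - q * ⌈r⌉₊) (k - q * ⌈r⌉₊) * c ^ ⌈r⌉₊ := by
  rw [Apoly_eq_sum_Icc_ceil c hm ((lt_mul_ceil_of_ne_natCast hq0 hr hm).trans_le hk)]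
  exact leadingCoeff_sum_Icc_C_mul_X_pow_sub _ hq0
    ((Nat.le_div_iff_mul_le hq0).2 (by rwa [mul_comm])) (Nat.mul_div_le k q)
    (Apoly_leadingTerm_ne_zero hq0 hr hc k _)

end NatCeil

theorem Apoly_basis_integer_qr_general
    (q : ℕ) (hq0 : 0 < q) (r : ℝ) (hr : ∀ n : ℕ, r ≠ n)
    (hqr : ∃ m : ℕ, 0 < m ∧ (q : ℝ) * r = m) (c : ℝ) (hc : 0 < c) :
    (∀ k : ℕ, q * ⌈r⌉₊ ≤ k →
        Apoly q r c k =
          ∑ i ∈ Finset.Icc ⌈r⌉₊ (k / q),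
            Polynomial.C ((-1 : ℝ) ^ k * genBinom r i *
                genBinom ((q : ℝ) * r - q * i) (k - q * i) * c ^ i) *
              Polynomial.X ^ (k - q * i) ∧
        (Apoly q r c k).degree = ((k - q * ⌈r⌉₊ : ℕ) : WithBot ℕ) ∧
        (Apoly q r c k).leadingCoeff =
          (-1 : ℝ) ^ k * genBinom r ⌈r⌉₊ *
            genBinom ((q : ℝ) * r - q * ⌈r⌉₊) (k - q * ⌈r⌉₊) * c ^ ⌈r⌉₊ ∧
        (-1 : ℝ) ^ k * genBinom r ⌈r⌉₊ *
            genBinom ((q : ℝ) * r - q * ⌈r⌉₊) (k - q * ⌈r⌉₊) * c ^ ⌈r⌉₊ ≠ 0) ∧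
      LinearIndependent ℝ (fun n : ℕ => Apoly q r c (n + q * ⌈r⌉₊)) ∧
      Submodule.span ℝ (Set.range fun n : ℕ => Apoly q r c (n + q * ⌈r⌉₊)) = ⊤ := by
  obtain ⟨m, -, hm⟩ := hqr
  let S : Polynomial.Sequence ℝ :=
    ⟨fun n => Apoly q r c (n + q * ⌈r⌉₊), fun n => by
      simpa using Apoly_degree hq0 hr hm hc.ne' (Nat.le_add_left (q * ⌈r⌉₊) n)⟩
  refine ⟨fun k hk => ⟨?_, ?_, ?_, ?_⟩, S.linearIndependent,
    S.span fun n => (leadingCoeff_ne_zero.2 (S.ne_zero n)).isUnit⟩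
  · exact Apoly_eq_sum_Icc_ceil c hm ((lt_mul_ceil_of_ne_natCast hq0 hr hm).trans_le hk)
  · exact Apoly_degree hq0 hr hm hc.ne' hk
  · exact Apoly_leadingCoeff hq0 hr hm hc.ne' hk
  · exact Apoly_leadingTerm_ne_zero hq0 hr hc.ne' k _

/-- If `q` is even, `r ∉ ℕ₀` but `qr ∈ ℕ`, then for `k ≥ q⌈r⌉` the sum defining
`A_k` collapses to indices `i ≥ ⌈r⌉`, `A_k` has degree exactly `k - q⌈r⌉` with
nonzero leading coefficient
`(-1)^k C(r,⌈r⌉) C(qr - q⌈r⌉, k - q⌈r⌉) c^{⌈r⌉}`, and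
`(A_k : k ≥ q⌈r⌉)` is a basis of the space of real polynomials. -/
theorem Apoly_basis_integer_qr
    (q : ℕ) (hq : Even q) (hq0 : 0 < q) (r : ℝ) (hr : ∀ n : ℕ, r ≠ n)
    (hqr : ∃ m : ℕ, 0 < m ∧ (q : ℝ) * r = m) (c : ℝ) (hc : 0 < c) :
    (∀ k : ℕ, q * ⌈r⌉₊ ≤ k →
        Apoly q r c k =
          ∑ i ∈ Finset.Icc ⌈r⌉₊ (k / q),
            Polynomial.C ((-1 : ℝ) ^ k * genBinom r i *
                genBinom ((q : ℝ) * r - q * i) (k - q * i) * c ^ i) *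
              Polynomial.X ^ (k - q * i) ∧
        (Apoly q r c k).degree = ((k - q * ⌈r⌉₊ : ℕ) : WithBot ℕ) ∧
        (Apoly q r c k).leadingCoeff =
          (-1 : ℝ) ^ k * genBinom r ⌈r⌉₊ *
            genBinom ((q : ℝ) * r - q * ⌈r⌉₊) (k - q * ⌈r⌉₊) * c ^ ⌈r⌉₊ ∧
        (-1 : ℝ) ^ k * genBinom r ⌈r⌉₊ *
            genBinom ((q : ℝ) * r - q * ⌈r⌉₊) (k - q * ⌈r⌉₊) * c ^ ⌈r⌉₊ ≠ 0) ∧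
      LinearIndependent ℝ (fun n : ℕ => Apoly q r c (n + q * ⌈r⌉₊)) ∧
      Submodule.span ℝ (Set.range fun n : ℕ => Apoly q r c (n + q * ⌈r⌉₊)) = ⊤ :=
  Apoly_basis_integer_qr_general q hq0 r hr hqr c hc
end

section
/- Let N ≥ 2 and p(x) = ∑_{k=0}^{N−1} a_k x^k a real polynomial of degree at most N−1. Then for x > 0, the N-th derivative of x ↦ p(x) ln(x) equals x^{−N} ∑_{j=0}^{N−1} (−1)^{N−1+j} c_j a_j x^j for some positive constants c_0, …, c_{N−1} (depending only on N and j, not on p). -/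
/-!
The `(k+1)`-st derivative of `t ^ k * log t` is `k! / t`, by induction on `k`: the derivative
of `t ^ (k+1) * log t` is `(k+1) t ^ k log t + t ^ k`, and the `k+1` remaining derivatives
kill the monomial `t ^ k`.
The remaining `n - 1 - k` derivatives of `k! / t` produce `(-1)^(n-1-k) (n-1-k)!`,
so each monomial `a_k t^k` contributes a single term `± k! (n-1-k)! a_k x^k / x^n`.
-/

open Real
open scoped Nat

lemma iteratedDeriv_iteratedDeriv {𝕜 F : Type*} [NontriviallyNormedField 𝕜]
    [NormedAddCommGroup F] [NormedSpace 𝕜 F] (m n : ℕ) (f : 𝕜 → F) :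
    iteratedDeriv m (iteratedDeriv n f) = iteratedDeriv (m + n) f := by
  simp only [iteratedDeriv_eq_iterate, Function.iterate_add_apply]

lemma hasDerivAt_pow_succ_mul_log (k : ℕ) {x : ℝ} (hx : x ≠ 0) :
    HasDerivAt (fun t => t ^ (k + 1) * log t) ((k + 1) * (x ^ k * log x) + x ^ k) x :=
  ((hasDerivAt_pow (k + 1) x).mul (hasDerivAt_log hx)).congr_deriv <| by
    field_simp
    push_cast
    ring

lemma contDiffAt_pow_mul_log {n : WithTop ℕ∞} (k : ℕ) {x : ℝ} (hx : x ≠ 0) :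
    ContDiffAt ℝ n (fun t => t ^ k * log t) x :=
  (contDiffAt_id.pow k).mul (contDiffAt_log.mpr hx)

lemma iteratedDeriv_succ_pow_mul_log (k : ℕ) {x : ℝ} (hx : x ≠ 0) :
    iteratedDeriv (k + 1) (fun t => t ^ k * log t) x = k ! * x⁻¹ := by
  induction k generalizing x with
  | zero => simp [deriv_log]
  | succ k ih =>
    have hderiv : deriv (fun t => t ^ (k + 1) * log t)
        =ᶠ[nhds x] fun t => (k + 1) * (t ^ k * log t) + t ^ k := by
      filter_upwards [isOpen_ne.mem_nhds hx] with t ht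
      exact (hasDerivAt_pow_succ_mul_log k ht).deriv
    rw [iteratedDeriv_succ', hderiv.iteratedDeriv_eq,
      iteratedDeriv_fun_add (contDiffAt_const.mul (contDiffAt_pow_mul_log k hx)) (by fun_prop),
      iteratedDeriv_const_mul_field, ih hx, iteratedDeriv_pow,
      Nat.descFactorial_of_lt k.lt_succ_self]
    push_cast [Nat.factorial_succ]
    ring

lemma iteratedDeriv_pow_mul_log {n k : ℕ} (hk : k < n) {x : ℝ} (hx : x ≠ 0) :
    iteratedDeriv n (fun t => t ^ k * log t) x =
      (-1) ^ (n - 1 - k) * k ! * (n - 1 - k)! * x ^ k / x ^ n := by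
  obtain ⟨m, rfl⟩ : ∃ m, n = m + (k + 1) := ⟨n - (k + 1), by omega⟩
  have hsucc : iteratedDeriv (k + 1) (fun t => t ^ k * log t)
      =ᶠ[nhds x] fun t => k ! * t⁻¹ := by
    filter_upwards [isOpen_ne.mem_nhds hx] with t ht
    exact iteratedDeriv_succ_pow_mul_log k ht
  rw [← iteratedDeriv_iteratedDeriv, hsucc.iteratedDeriv_eq, iteratedDeriv_const_mul_field,
    iteratedDeriv_eq_iterate, iter_deriv_inv, show m + (k + 1) - 1 - k = m by omega]
  rw [show (-1 - m : ℤ) = (k : ℤ) - (m + (k + 1) : ℕ) by push_cast; ring, zpow_sub₀ hx,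
    zpow_natCast, zpow_natCast]
  ring

theorem iteratedDeriv_poly_mul_log_general (N : ℕ) :
    ∃ c : ℕ → ℝ, (∀ j < N, 0 < c j) ∧
      ∀ a : ℕ → ℝ, ∀ x : ℝ, 0 < x →
        iteratedDeriv N
            (fun t : ℝ => (∑ k ∈ Finset.range N, a k * t ^ k) * Real.log t) x =
          (x ^ N)⁻¹ *
            ∑ j ∈ Finset.range N, (-1 : ℝ) ^ (N - 1 + j) * c j * a j * x ^ j := by
  refine ⟨fun j => j ! * (N - 1 - j)!, fun j _ => by positivity, fun a x hx => ?_⟩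
  simp_rw [Finset.sum_mul, mul_assoc (a _)]
  rw [iteratedDeriv_fun_sum fun k _ => contDiffAt_const.mul (contDiffAt_pow_mul_log k hx.ne'),
    Finset.mul_sum]
  refine Finset.sum_congr rfl fun k hk => ?_
  have hkN := Finset.mem_range.mp hk
  have hsign : (-1 : ℝ) ^ (N - 1 + k) = (-1) ^ (N - 1 - k) := by
    rw [show N - 1 + k = (N - 1 - k) + 2 * k by omega, pow_add, pow_mul]
    simp
  rw [iteratedDeriv_const_mul_field, iteratedDeriv_pow_mul_log hkN hx.ne', hsign]
  ring

/-- For `N ≥ 2` there exist positive constants `c_0, …, c_{N-1}` (depending only on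
`N` and `j`, not on the polynomial) such that for every polynomial
`p(x) = ∑_{k<N} a_k x^k` and every `x > 0`, the `N`-th derivative of `x ↦ p(x) ln x`
equals `x^{-N} ∑_{j<N} (-1)^{N-1+j} c_j a_j x^j`. -/
theorem iteratedDeriv_poly_mul_log (N : ℕ) (hN : 2 ≤ N) :
    ∃ c : ℕ → ℝ, (∀ j < N, 0 < c j) ∧
      ∀ a : ℕ → ℝ, ∀ x : ℝ, 0 < x →
        iteratedDeriv N
            (fun t : ℝ => (∑ k ∈ Finset.range N, a k * t ^ k) * Real.log t) x =
          (x ^ N)⁻¹ *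
            ∑ j ∈ Finset.range N, (-1 : ℝ) ^ (N - 1 + j) * c j * a j * x ^ j :=
  iteratedDeriv_poly_mul_log_general N
end

section
/- For x ∈ ℝ fixed and all y > |x| + 2, ln(1 + (x − y)^2) = 2 ln|y| − ∑_{j=1}^∞ C_{j+1}(x)/(j y^j), where the C_j are polynomials with C_j(x) = 2 x^{j−1} + (lower order terms), i.e. deg C_j = j − 1 with leading coefficient 2, and the series converges absolutely. -/
/-!
The polynomials are `C_{k+1}(x) = (x + i)^k + (x - i)^k = 2 Re (x + i)^k`. Since
`1 + (x - y)^2 = y^2 |1 - z|^2` with `z = (x + i)/y`, and `|z| < 1` once `y > |x| + 1`,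
taking real parts in `-log (1 - z) = ∑ z^n / n` gives the expansion, absolutely convergent
because `|z^n / n| ≤ |z|^n`.
-/

open Polynomial Complex

section
variable {R : Type*} [CommRing R] [Nontrivial R]

theorem degree_X_add_C_pow_add_X_add_C_pow (h2 : (2 : R) ≠ 0) (a b : R) (k : ℕ) :
    ((X + C a) ^ k + (X + C b) ^ k).degree = (k : WithBot ℕ) := by
  have ha := (monic_X_add_C a).pow k
  have hb := (monic_X_add_C b).pow k
  rw [degree_add_eq_of_leadingCoeff_add_ne_zero
      (by rwa [ha.leadingCoeff, hb.leadingCoeff, one_add_one_eq_two]),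
    degree_eq_natDegree ha.ne_zero, degree_eq_natDegree hb.ne_zero, natDegree_pow_X_add_C,
    natDegree_pow_X_add_C, max_self]

theorem leadingCoeff_X_add_C_pow_add_X_add_C_pow (h2 : (2 : R) ≠ 0) (a b : R) (k : ℕ) :
    ((X + C a) ^ k + (X + C b) ^ k).leadingCoeff = 2 := by
  have ha := (monic_X_add_C a).pow k
  have hb := (monic_X_add_C b).pow k
  have hdeg : ((X + C a) ^ k).degree = ((X + C b) ^ k).degree := by
    rw [degree_eq_natDegree ha.ne_zero, degree_eq_natDegree hb.ne_zero, natDegree_pow_X_add_C,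
      natDegree_pow_X_add_C]
  rw [leadingCoeff_add_of_degree_eq hdeg
      (by rwa [ha.leadingCoeff, hb.leadingCoeff, one_add_one_eq_two]),
    ha.leadingCoeff, hb.leadingCoeff, one_add_one_eq_two]

end

/-- The real polynomial `(X + i)^k + (X - i)^k`; the recursion holds because `x ± i` are the
roots of `T^2 - 2xT + (x^2 + 1)`. -/
noncomputable def conjPowSumPoly : ℕ → ℝ[X]
  | 0 => 2
  | 1 => 2 * X
  | k + 2 => 2 * X * conjPowSumPoly (k + 1) - (X ^ 2 + 1) * conjPowSumPoly k

theorem map_conjPowSumPoly (k : ℕ) :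
    (conjPowSumPoly k).map (algebraMap ℝ ℂ) = (X + C I) ^ k + (X - C I) ^ k := by
  induction k using Nat.twoStepInduction with
  | zero => simp [conjPowSumPoly]; norm_num
  | one => simp [conjPowSumPoly]; ring
  | more k ih₀ ih₁ =>
    have hI : (C I : ℂ[X]) ^ 2 = -1 := by rw [← C_pow, I_sq, C_neg, C_1]
    simp only [conjPowSumPoly, Polynomial.map_sub, Polynomial.map_mul, Polynomial.map_add,
      Polynomial.map_pow, Polynomial.map_ofNat, Polynomial.map_X, Polynomial.map_one, ih₀, ih₁]
    linear_combination -((X + C I) ^ k + (X - C I) ^ k) * hI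

theorem degree_conjPowSumPoly (k : ℕ) : (conjPowSumPoly k).degree = k := by
  rw [← degree_map _ (algebraMap ℝ ℂ), map_conjPowSumPoly, sub_eq_add_neg, ← C_neg]
  exact degree_X_add_C_pow_add_X_add_C_pow two_ne_zero _ _ k

theorem leadingCoeff_conjPowSumPoly (k : ℕ) : (conjPowSumPoly k).leadingCoeff = 2 := by
  have h := leadingCoeff_map (algebraMap ℝ ℂ) (p := conjPowSumPoly k)
  rw [map_conjPowSumPoly, sub_eq_add_neg, ← C_neg,
    leadingCoeff_X_add_C_pow_add_X_add_C_pow two_ne_zero] at h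
  exact ofReal_injective (by simpa using h.symm)

theorem eval_conjPowSumPoly (k : ℕ) (x : ℝ) :
    (conjPowSumPoly k).eval x = 2 * ((x + I) ^ k).re := by
  apply ofReal_injective
  have h : (((conjPowSumPoly k).eval x : ℝ) : ℂ) = (x + I) ^ k + (x - I) ^ k :=
    calc (((conjPowSumPoly k).eval x : ℝ) : ℂ)
        = ((conjPowSumPoly k).map (algebraMap ℝ ℂ)).eval (x : ℂ) := by
          rw [eval_map_algebraMap]; exact (aeval_ofReal _ x).symm
      _ = (x + I) ^ k + (x - I) ^ k := by simp [map_conjPowSumPoly]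
  rw [h, ← add_conj, map_pow, map_add, conj_ofReal, conj_I, sub_eq_add_neg]

theorem summable_norm_pow_succ_div {z : ℂ} (hz : ‖z‖ < 1) :
    Summable fun n : ℕ => ‖z ^ (n + 1) / (n + 1)‖ := by
  refine ((summable_geometric_of_lt_one (norm_nonneg z) hz).mul_left ‖z‖).of_nonneg_of_le
    (fun _ => norm_nonneg _) fun n => ?_
  rw [norm_div, norm_pow, ← pow_succ']
  exact div_le_self (by positivity) (by norm_cast; simp)

theorem two_mul_log_norm_one_sub_div {x y : ℝ} (hy : y ≠ 0) :
    2 * Real.log ‖1 - (x + I) / y‖ = Real.log (1 + (x - y) ^ 2) - 2 * Real.log |y| := by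
  have hsq : ‖1 - (x + I) / y‖ ^ 2 = (1 + (x - y) ^ 2) / y ^ 2 := by
    rw [Complex.sq_norm, one_sub_div (ofReal_ne_zero.mpr hy), normSq_div, normSq_ofReal]
    simp [normSq_apply]
    ring
  have two_mul_log (t : ℝ) : 2 * Real.log t = Real.log (t ^ 2) := by
    rw [Real.log_pow]; norm_num
  rw [two_mul_log, two_mul_log, hsq, Real.log_div (by positivity) (pow_ne_zero 2 hy), sq_abs]

theorem norm_add_I_div_lt_one {x y : ℝ} (h : |x| + 1 < y) : ‖(x + I) / y‖ < 1 := by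
  have hy : 0 < y := by linarith [abs_nonneg x]
  rw [norm_div, norm_real, Real.norm_of_nonneg hy.le, div_lt_one hy]
  calc ‖(x : ℂ) + I‖ ≤ ‖(x : ℂ)‖ + ‖I‖ := norm_add_le _ _
    _ = |x| + 1 := by rw [norm_real, Real.norm_eq_abs, norm_I]
    _ < y := h

/-- There are polynomials `C_j` (for `j ≥ 2`) of degree `j - 1` with leading
coefficient `2` such that for every `x` and every `y > |x| + 2`,
`ln(1 + (x-y)^2) = 2 ln |y| - ∑_{j=1}^∞ C_{j+1}(x) / (j y^j)`, with the series
converging absolutely. -/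
theorem log_expansion :
    ∃ Cp : ℕ → Polynomial ℝ,
      (∀ j : ℕ, 2 ≤ j →
          (Cp j).degree = ((j - 1 : ℕ) : WithBot ℕ) ∧ (Cp j).leadingCoeff = 2) ∧
      ∀ x y : ℝ, |x| + 2 < y →
        Summable (fun j : ℕ =>
          |(Cp (j + 2)).eval x / (((j : ℝ) + 1) * y ^ (j + 1))|) ∧
        Real.log (1 + (x - y) ^ 2) =
          2 * Real.log |y| -
            ∑' j : ℕ, (Cp (j + 2)).eval x / (((j : ℝ) + 1) * y ^ (j + 1)) := by
  refine ⟨fun j => conjPowSumPoly (j - 1),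
    fun j _ => ⟨degree_conjPowSumPoly _, leadingCoeff_conjPowSumPoly _⟩, fun x y hxy => ?_⟩
  have hy : 0 < y := by linarith [abs_nonneg x]
  set z : ℂ := (x + I) / y
  have hz : ‖z‖ < 1 := norm_add_I_div_lt_one (by linarith)
  have hterm (j : ℕ) : (conjPowSumPoly (j + 2 - 1)).eval x / ((j + 1) * y ^ (j + 1)) =
      2 * (z ^ (j + 1) / (j + 1)).re := by
    have hz_pow :
        z ^ (j + 1) / (j + 1) = (x + I) ^ (j + 1) / (((j + 1) * y ^ (j + 1) : ℝ) : ℂ) := by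
      rw [div_pow, div_div]
      push_cast
      ring
    rw [show j + 2 - 1 = j + 1 from rfl, eval_conjPowSumPoly, hz_pow, div_ofReal_re, mul_div_assoc]
  simp only [hterm]
  refine ⟨((summable_norm_pow_succ_div hz).mul_left 2).of_nonneg_of_le (fun _ => abs_nonneg _)
    fun j => ?_, ?_⟩
  · rw [abs_mul, abs_two]
    gcongr
    exact abs_re_le_norm _
  · rw [((hasSum_re (hasSum_taylorSeries_neg_log' hz)).mul_left 2).tsum_eq, neg_re, log_re,
      mul_neg, two_mul_log_norm_one_sub_div hy.ne']
    ring
end
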